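/- The vectors v^{(ℓ)} = e_1 − e_{ℓ+1} for ℓ = 1,…,t form a basis of the kernel of M = S^{t+1} + b S^{t+2} + δ J when δ ≠ 0. -/

import Mathlib

open Matrix Finset

/-- The n×n shift matrix with ones on the superdiagonal. -/
def shiftMat (n : ℕ) : Matrix (Fin n) (Fin n) ℂ :=
  Matrix.of fun j k => if (k : ℕ) = (j : ℕ) + 1 then 1 else 0

/-- The matrix `M = S^{t+1} + b S^{t+2} + δ J` of the dynamical system. -/
noncomputable def modelMat (n t : ℕ) (b δ : ℂ) : Matrix (Fin n) (Fin n) ℂ :=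
  (shiftMat n) ^ (t + 1) + b • (shiftMat n) ^ (t + 2) + δ • Matrix.of fun _ _ => (1 : ℂ)

/-- The standard basis vector `e_{i+1}` of `ℂ^n`, indexed by `i : ℕ` (zero-based). -/
def stdVec (n : ℕ) (i : ℕ) : Fin n → ℂ := fun j => if (j : ℕ) = i then 1 else 0

/-!
Write `x̃ : ℕ → ℂ` for the extension of `x` by zero. Row `j` of `M x = 0` reads
`x̃ (j + t + 1) + b x̃ (j + t + 2) + δ ∑ x = 0`. In the last row both shifted terms vanish, so
`δ ≠ 0` gives `∑ x = 0`; the other rows then say `x̃ m = -b x̃ (m + 1)` for `m ≥ t + 1`, and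
downward induction from `m ≥ n` makes `x̃` vanish from `t + 1` on. So the kernel consists of the
vectors supported on the first `t + 1` coordinates with coordinate sum zero, and such an `x`
equals `∑ₗ (-xₗ₊₁) (e₀ - eₗ₊₁)`.
-/

section ZeroExtend

variable {R : Type*} {n : ℕ}

def zeroExtend [Zero R] (x : Fin n → R) (m : ℕ) : R :=
  if h : m < n then x ⟨m, h⟩ else 0

@[simp]
lemma zeroExtend_val [Zero R] (x : Fin n → R) (k : Fin n) : zeroExtend x k = x k := by
  simp [zeroExtend]

lemma zeroExtend_of_le [Zero R] (x : Fin n → R) {m : ℕ} (h : n ≤ m) : zeroExtend x m = 0 :=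
  dif_neg h.not_gt

lemma sum_eq_sum_range_zeroExtend [AddCommMonoid R] {x : Fin n → R} {a : ℕ}
    (hx : ∀ m ≥ a, zeroExtend x m = 0) : ∑ k, x k = ∑ i ∈ range a, zeroExtend x i := by
  calc ∑ k, x k = ∑ i ∈ range n, zeroExtend x i := by
        simp only [← zeroExtend_val x, Fin.sum_univ_eq_sum_range (zeroExtend x)]
    _ = ∑ i ∈ range (n + a), zeroExtend x i :=
        (eventually_constant_sum (fun _ => zeroExtend_of_le x) (by omega)).symm
    _ = ∑ i ∈ range a, zeroExtend x i := eventually_constant_sum hx (by omega)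

end ZeroExtend

lemma eq_zero_of_forall_eq_mul_succ {R : Type*} [MulZeroClass R] {f : ℕ → R} {a N : ℕ} (c : R)
    (hN : ∀ m ≥ N, f m = 0) (hf : ∀ m ≥ a, f m = c * f (m + 1)) : ∀ m ≥ a, f m = 0 := by
  intro m hm
  induction h : N - m generalizing m with
  | zero => exact hN m (by omega)
  | succ d ih => rw [hf m hm, ih (m + 1) (by omega) (by omega), mul_zero]

lemma shiftMat_mulVec_apply {n : ℕ} (y : Fin n → ℂ) (j : Fin n) :
    (shiftMat n *ᵥ y) j = zeroExtend y (j + 1) := by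
  have h := Fin.sum_univ_eq_sum_range (fun i => if i = (j : ℕ) + 1 then zeroExtend y i else 0) n
  simp only [zeroExtend_val, sum_ite_eq', mem_range] at h
  simp only [shiftMat, mulVec, dotProduct, of_apply, ite_mul, one_mul, zero_mul]
  rw [h, ite_eq_left_iff]
  exact fun hj => (zeroExtend_of_le y (not_lt.mp hj)).symm

lemma zeroExtend_shiftMat_mulVec {n : ℕ} (y : Fin n → ℂ) (m : ℕ) :
    zeroExtend (shiftMat n *ᵥ y) m = zeroExtend y (m + 1) := by
  by_cases hm : m < n
  · rw [zeroExtend, dif_pos hm]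
    exact shiftMat_mulVec_apply y ⟨m, hm⟩
  · rw [zeroExtend_of_le _ (not_lt.mp hm), zeroExtend_of_le _ (by omega)]

lemma zeroExtend_shiftMat_pow_mulVec {n : ℕ} (p : ℕ) (x : Fin n → ℂ) (m : ℕ) :
    zeroExtend (shiftMat n ^ p *ᵥ x) m = zeroExtend x (m + p) := by
  induction p generalizing m with
  | zero => simp
  | succ p ih =>
    rw [pow_succ', ← mulVec_mulVec, zeroExtend_shiftMat_mulVec, ih, add_right_comm, add_assoc]

lemma modelMat_mulVec_apply {n : ℕ} (t : ℕ) (b δ : ℂ) (x : Fin n → ℂ) (j : Fin n) :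
    (modelMat n t b δ *ᵥ x) j =
      zeroExtend x (j + (t + 1)) + b * zeroExtend x (j + (t + 2)) + δ * ∑ k, x k := by
  rw [modelMat, add_mulVec, add_mulVec, smul_mulVec, smul_mulVec, Pi.add_apply, Pi.add_apply,
    Pi.smul_apply, Pi.smul_apply, ← zeroExtend_val (_ *ᵥ x), ← zeroExtend_val (_ *ᵥ x),
    zeroExtend_shiftMat_pow_mulVec, zeroExtend_shiftMat_pow_mulVec]
  simp [mulVec, dotProduct]

lemma sum_stdVec {n i : ℕ} (h : i < n) : ∑ k, stdVec n i k = 1 := by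
  simp [stdVec, Fin.sum_univ_eq_sum_range (fun k => if k = i then (1 : ℂ) else 0), h]

lemma linearIndependent_stdVec_sub {n t : ℕ} (h : t + 1 ≤ n) :
    LinearIndependent ℂ (fun ℓ : Fin t => stdVec n 0 - stdVec n (ℓ + 1)) := by
  refine LinearIndependent.of_comp (LinearMap.funLeft ℂ ℂ fun ℓ : Fin t => Fin.castLE h ℓ.succ) ?_
  have hcomp : LinearMap.funLeft ℂ ℂ (fun ℓ : Fin t => Fin.castLE h ℓ.succ) ∘
      (fun ℓ : Fin t => stdVec n 0 - stdVec n (ℓ + 1)) = -⇑(Pi.basisFun ℂ (Fin t)) := by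
    ext ℓ ℓ'
    simp [stdVec, Pi.single_apply, Fin.ext_iff, eq_comm]
  rw [hcomp]
  exact (Pi.basisFun ℂ (Fin t)).linearIndependent.neg

lemma modelMat_mulVec_eq_zero {n t : ℕ} (b δ : ℂ) {x : Fin n → ℂ} (hsum : ∑ k, x k = 0)
    (hx : ∀ m ≥ t + 1, zeroExtend x m = 0) : modelMat n t b δ *ᵥ x = 0 := by
  ext j
  rw [modelMat_mulVec_apply, hsum, hx _ (by omega), hx _ (by omega)]
  simp

lemma modelMat_mulVec_eq_zero_iff {n t : ℕ} {b δ : ℂ} (hδ : δ ≠ 0) (x : Fin n → ℂ) :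
    modelMat n t b δ *ᵥ x = 0 ↔ ∑ k, x k = 0 ∧ ∀ m ≥ t + 1, zeroExtend x m = 0 := by
  refine ⟨fun hx => ?_, fun h => modelMat_mulVec_eq_zero b δ h.1 h.2⟩
  have row (j : Fin n) :
      zeroExtend x (j + (t + 1)) + b * zeroExtend x (j + (t + 2)) + δ * ∑ k, x k = 0 := by
    rw [← modelMat_mulVec_apply, hx, Pi.zero_apply]
  have hsum : ∑ k, x k = 0 := by
    cases n with
    | zero => simp
    | succ n => simpa [zeroExtend_of_le, hδ] using row (Fin.last n)
  refine ⟨hsum, eq_zero_of_forall_eq_mul_succ (N := n) (-b) (fun m => zeroExtend_of_le x) ?_⟩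
  intro m hm
  by_cases hmn : m < n
  · have := row ⟨m - (t + 1), by omega⟩
    rw [hsum, mul_zero, add_zero, show m - (t + 1) + (t + 1) = m by omega,
      show m - (t + 1) + (t + 2) = m + 1 by omega] at this
    linear_combination this
  · rw [zeroExtend_of_le x (not_lt.mp hmn), zeroExtend_of_le x (by omega), mul_zero]

lemma modelMat_mulVec_stdVec_sub {n t ℓ : ℕ} (b δ : ℂ) (hℓ : ℓ < t) (htn : t + 1 ≤ n) :
    modelMat n t b δ *ᵥ (stdVec n 0 - stdVec n (ℓ + 1)) = 0 := by
  refine modelMat_mulVec_eq_zero b δ ?_ fun m hm => ?_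
  · simp only [Pi.sub_apply, sum_sub_distrib]
    rw [sum_stdVec (by omega), sum_stdVec (by omega), sub_self]
  · simp [zeroExtend, stdVec, show m ≠ 0 by omega, show m ≠ ℓ + 1 by omega]

lemma eq_sum_range_smul_stdVec {n a : ℕ} {x : Fin n → ℂ} (hx : ∀ m ≥ a, zeroExtend x m = 0) :
    x = ∑ i ∈ range a, zeroExtend x i • stdVec n i := by
  ext k
  simp only [Finset.sum_apply, Pi.smul_apply, stdVec, smul_eq_mul, mul_ite, mul_one, mul_zero,
    sum_ite_eq, mem_range]
  split_ifs with hk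
  · rw [zeroExtend_val]
  · rw [← zeroExtend_val x k, hx _ (not_lt.mp hk)]

lemma eq_sum_smul_stdVec_sub {n t : ℕ} {x : Fin n → ℂ} (hsum : ∑ k, x k = 0)
    (hx : ∀ m ≥ t + 1, zeroExtend x m = 0) :
    x = ∑ ℓ : Fin t, (-zeroExtend x (ℓ + 1)) • (stdVec n 0 - stdVec n (ℓ + 1)) := by
  have h0 : zeroExtend x 0 = -∑ ℓ ∈ range t, zeroExtend x (ℓ + 1) := by
    rw [sum_eq_sum_range_zeroExtend hx, sum_range_succ'] at hsum
    linear_combination hsum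
  calc x = ∑ i ∈ range (t + 1), zeroExtend x i • stdVec n i := eq_sum_range_smul_stdVec hx
    _ = ∑ ℓ ∈ range t, zeroExtend x (ℓ + 1) • stdVec n (ℓ + 1) + zeroExtend x 0 • stdVec n 0 :=
      sum_range_succ' _ _
    _ = _ := by
      rw [h0, Fin.sum_univ_eq_sum_range
        (fun ℓ => (-zeroExtend x (ℓ + 1)) • (stdVec n 0 - stdVec n (ℓ + 1)))]
      simp only [smul_sub, neg_smul, sum_sub_distrib, sum_neg_distrib, sum_smul]
      abel

theorem modelMat_ker_basis_general (n t : ℕ) (hn : 2 ≤ n) (ht2 : t ≤ n - 2)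
    (b δ : ℂ) (hδ : δ ≠ 0) :
    LinearIndependent ℂ (fun ℓ : Fin t => stdVec n 0 - stdVec n ((ℓ : ℕ) + 1)) ∧
    Submodule.span ℂ (Set.range (fun ℓ : Fin t => stdVec n 0 - stdVec n ((ℓ : ℕ) + 1)))
      = LinearMap.ker (modelMat n t b δ).mulVecLin := by
  have htn : t + 1 ≤ n := by omega
  refine ⟨linearIndependent_stdVec_sub htn, le_antisymm ?_ fun x hx => ?_⟩
  · rw [Submodule.span_le]
    rintro _ ⟨ℓ, rfl⟩
    exact modelMat_mulVec_stdVec_sub b δ ℓ.isLt htn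
  · rw [LinearMap.mem_ker, mulVecLin_apply, modelMat_mulVec_eq_zero_iff hδ] at hx
    rw [eq_sum_smul_stdVec_sub hx.1 hx.2]
    exact Submodule.sum_mem _ fun ℓ _ => Submodule.smul_mem _ _ (Submodule.subset_span ⟨ℓ, rfl⟩)

/-- The vectors `v^{(ℓ)} = e₁ − e_{ℓ+1}`, `ℓ = 1, …, t`, form a basis of
`ker (S^{t+1} + b S^{t+2} + δ J)` when `δ ≠ 0`. -/
theorem modelMat_ker_basis (n t : ℕ) (hn : 2 ≤ n) (ht1 : 1 ≤ t) (ht2 : t ≤ n - 2)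
    (b δ : ℂ) (hδ : δ ≠ 0) :
    LinearIndependent ℂ (fun ℓ : Fin t => stdVec n 0 - stdVec n ((ℓ : ℕ) + 1)) ∧
    Submodule.span ℂ (Set.range (fun ℓ : Fin t => stdVec n 0 - stdVec n ((ℓ : ℕ) + 1)))
      = LinearMap.ker (modelMat n t b δ).mulVecLin :=
  modelMat_ker_basis_general n t hn ht2 b δ hδ
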